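/- Let T be the tree with edges {u1u2, u2u3, u3u4, u4u5, u3u'3, u'3u''3} (a path u1u2u3u4u5 with a pendant path u3u'3u''3). If L is a list assignment with |L(u1)| ≥ 2, |L(u2)| ≥ 3, |L(u3)| ≥ 3, |L(u4)| ≥ 4, |L(u5)| ≥ 2, |L(u'3)| ≥ 4, |L(u''3)| ≥ 2, then T admits a 2-distance L-coloring. -/
import Mathlib

/-- The tree of the corresponding configuration, with vertices 0 = u1, 1 = u2, 2 = u3, 3 = u4, 4 = u5, 5 = u'3, 6 = u''3. -/
def T9 : SimpleGraph (Fin 7) :=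
  SimpleGraph.fromRel (fun u v => (u = 0 ∧ v = 1) ∨ (u = 1 ∧ v = 2) ∨ (u = 2 ∧ v = 3) ∨ (u = 3 ∧ v = 4) ∨ (u = 2 ∧ v = 5) ∨ (u = 5 ∧ v = 6))

instance : DecidableRel T9.Adj := fun u v =>
  decidable_of_iff _ (SimpleGraph.fromRel_adj _ u v).symm

lemma pick_not_mem {s t : Finset ℕ} (h : t.card < s.card) : ∃ c ∈ s, c ∉ t := by
  have h2 : 0 < (s \ t).card := lt_of_lt_of_le (Nat.sub_pos_of_lt h) (Finset.le_card_sdiff t s)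
  obtain ⟨c, hc⟩ := Finset.card_pos.mp h2
  rw [Finset.mem_sdiff] at hc
  exact ⟨c, hc.1, hc.2⟩

lemma pick2 {P Q : Finset ℕ} (x : ℕ) (hP : 2 ≤ P.card) (hQ : 3 ≤ Q.card) :
    ∃ c ∈ Q, c ≠ x ∧ ∃ d ∈ P, d ≠ x ∧ d ≠ c := by
  obtain ⟨d, hd, hd'⟩ := pick_not_mem (s := P) (t := {x})
    (lt_of_lt_of_le (by simp) hP)
  obtain ⟨c, hc, hc'⟩ := pick_not_mem (s := Q) (t := {x, d})
    (lt_of_lt_of_le (lt_of_le_of_lt (Finset.card_insert_le _ _) (by simp)) hQ)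
  simp only [Finset.mem_insert, Finset.mem_singleton, not_or] at hc' hd'
  exact ⟨c, hc, hc'.1, d, hd, hd', fun h => hc'.2 h.symm⟩

/-- The configuration admits a 2-distance coloring from the given lists. -/
theorem colorable_v (L : Fin 7 → Finset ℕ)
    (h0 : 2 ≤ (L 0).card)
    (h1 : 3 ≤ (L 1).card)
    (h2 : 3 ≤ (L 2).card)
    (h3 : 4 ≤ (L 3).card)
    (h4 : 2 ≤ (L 4).card)
    (h5 : 4 ≤ (L 5).card)
    (h6 : 2 ≤ (L 6).card) :
    ∃ φ : Fin 7 → ℕ, (∀ v, φ v ∈ L v) ∧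
      ∀ u v : Fin 7, u ≠ v →
        (T9.Adj u v ∨ ∃ w, T9.Adj u w ∧ T9.Adj w v) → φ u ≠ φ v := by
  -- choose c2 ∈ L2 such that vertex 4 can always be finished
  have key : ∃ c2 ∈ L 2, ∀ z : ℕ, ∃ c4 ∈ L 4, c4 ≠ c2 ∧ c4 ≠ z := by
    by_cases hA : ∃ c2 ∈ L 2, c2 ∉ L 4
    · obtain ⟨c2, hc2, hn⟩ := hA
      refine ⟨c2, hc2, fun z => ?_⟩
      obtain ⟨c4, hc4, hz⟩ := pick_not_mem (s := L 4) (t := {z})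
        (lt_of_lt_of_le (by simp) h4)
      simp only [Finset.mem_singleton] at hz
      exact ⟨c4, hc4, fun h => hn (h ▸ hc4), hz⟩
    · push_neg at hA
      have hsub : L 2 ⊆ L 4 := hA
      have h4' : 3 ≤ (L 4).card := le_trans h2 (Finset.card_le_card hsub)
      obtain ⟨c2, hc2⟩ := Finset.card_pos.mp (by omega : 0 < (L 2).card)
      refine ⟨c2, hc2, fun z => ?_⟩
      obtain ⟨c4, hc4, hz⟩ := pick_not_mem (s := L 4) (t := {c2, z})
        (lt_of_lt_of_le (lt_of_le_of_lt (Finset.card_insert_le _ _) (by simp)) h4')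
      simp only [Finset.mem_insert, Finset.mem_singleton, not_or] at hz
      exact ⟨c4, hc4, hz.1, hz.2⟩
  obtain ⟨c2, hc2, hv4⟩ := key
  -- choose c1 (and pendant c0)
  obtain ⟨c1, hc1, hc1c2, c0, hc0, hc0c2, hc0c1⟩ := pick2 c2 h0 h1
  -- choose c5 ∈ L5 \ {c1} (and pendant c6)
  have h5' : 3 ≤ (L 5 \ {c1}).card := by
    have := Finset.le_card_sdiff ({c1} : Finset ℕ) (L 5)
    simp only [Finset.card_singleton] at this
    omega
  obtain ⟨c5, hc5m, hc5c2, c6, hc6, hc6c2, hc6c5⟩ := pick2 c2 h6 h5'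
  rw [Finset.mem_sdiff, Finset.mem_singleton] at hc5m
  obtain ⟨hc5, hc5c1⟩ := hc5m
  -- choose c3 in L3 avoiding c1, c2, c5
  have hcard3 : ({c1, c2, c5} : Finset ℕ).card < 4 := by
    have a := Finset.card_insert_le c1 ({c2, c5} : Finset ℕ)
    have b := Finset.card_insert_le c2 ({c5} : Finset ℕ)
    have c : ({c5} : Finset ℕ).card = 1 := Finset.card_singleton c5
    omega
  obtain ⟨c3, hc3, hc3'⟩ := pick_not_mem (s := L 3) (t := {c1, c2, c5})
    (lt_of_lt_of_le hcard3 h3)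
  simp only [Finset.mem_insert, Finset.mem_singleton, not_or] at hc3'
  obtain ⟨hc3c1, hc3c2, hc3c5⟩ := hc3'
  -- choose c4
  obtain ⟨c4, hc4, hc4c2, hc4c3⟩ := hv4 c3
  refine ⟨![c0, c1, c2, c3, c4, c5, c6], ?_, ?_⟩
  · intro v
    fin_cases v <;> simpa using ‹_›
  · intro u v huv h
    fin_cases u <;> fin_cases v <;>
      first
      | exact absurd rfl huv
      | exact absurd h (by decide)
      | simp [hc0c1, hc0c2, hc1c2, hc3c1, hc5c1, hc3c2, hc4c2, hc5c2, hc6c2,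
          hc4c3, hc3c5, hc6c5, Ne.symm hc0c1, Ne.symm hc0c2, Ne.symm hc1c2,
          Ne.symm hc3c1, Ne.symm hc3c2, Ne.symm hc4c2, Ne.symm hc5c2,
          Ne.symm hc6c2, Ne.symm hc4c3, Ne.symm hc3c5, Ne.symm hc6c5,
          (Ne.symm hc5c1 : c1 ≠ c5), (hc5c1 : c5 ≠ c1),
          (show (![c0, c1, c2, c3, c4, c5, c6] : Fin 7 → ℕ) 5 = c5 from rfl),
          (show (![c0, c1, c2, c3, c4, c5, c6] : Fin 7 → ℕ) 6 = c6 from rfl)]
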